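/- arXiv:1001.4427 — 2 statements merged into one kernel-verified Lean document; each statement's English description precedes it below -/
import Mathlib

section
/- Given an abstract strategy ζ over an ARS consisting only of finite derivations, there exists a memoryless intensional strategy λ whose finite support of extension equals ζ if and only if ζ is factor-closed and closed under composition. -/
/-- A step of an abstract reduction system: (source, label, target). -/
abbrev Step (O L : Type) := O × L × O

/-- A list of steps forms a derivation when consecutive steps are composable. -/
def ChainOK {O L : Type} (l : List (Step O L)) : Prop :=
  List.Chain' (fun s t => t.1 = s.2.2) l

/-- `Γ` is a functional relation. -/
def FunctionalARS {O L : Type} (Γ : Set (Step O L)) : Prop :=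
  ∀ a φ b₁ b₂, (a, φ, b₁) ∈ Γ → (a, φ, b₂) ∈ Γ → b₁ = b₂

/-- The trace (history) associated with a finite derivation. -/
def histL {O L : Type} (l : List (Step O L)) : List (O × L) :=
  l.map fun s => (s.1, s.2.1)

/-- Two finite derivations are composable. -/
def Composable {O L : Type} (l₁ l₂ : List (Step O L)) : Prop :=
  l₁ = [] ∨ l₂ = [] ∨
    ∃ s t, l₁.getLast? = some s ∧ l₂.head? = some t ∧ t.1 = s.2.2

/-- ζ is factor-closed: every non-empty contiguous factor of a member is a
member. -/
def FactorClosed {O L : Type} (ζ : Set (List (Step O L))) : Prop :=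
  ∀ l ∈ ζ, ∀ l₁ l₂ l₃ : List (Step O L), l = l₁ ++ l₂ ++ l₃ → l₂ ≠ [] → l₂ ∈ ζ

/-- ζ is closed under composition of composable members. -/
def CompClosed {O L : Type} (ζ : Set (List (Step O L))) : Prop :=
  ∀ l₁ ∈ ζ, ∀ l₂ ∈ ζ, Composable l₁ l₂ → l₁ ++ l₂ ∈ ζ

/-- The finite support of the extension of a memoryless intensional strategy:
all finite non-empty derivations all of whose steps obey λ. -/
def FinMExt {O L : Type} (lam : O → Set (Step O L)) : Set (List (Step O L)) :=
  {l | l ≠ [] ∧ ChainOK l ∧ ∀ s ∈ l, s ∈ lam s.1}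

/-!
A memoryless strategy only constrains single steps, so its finite support is closed under
taking factors and under gluing composable derivations. Conversely, given ζ closed under both
operations, let λ allow exactly the steps whose one-step derivation lies in ζ: factor-closure
puts every step of a member of ζ into λ, and composition-closure rebuilds any λ-derivation
from its one-step pieces.
-/

section

variable {O L : Type}

theorem chainOK_append_of_composable {l₁ l₂ : List (Step O L)} (h₁ : ChainOK l₁)
    (h₂ : ChainOK l₂) (hcomp : Composable l₁ l₂) : ChainOK (l₁ ++ l₂) := by
  rw [ChainOK, List.Chain', List.isChain_append]
  refine ⟨h₁, h₂, fun x hx y hy => ?_⟩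
  rcases hcomp with rfl | rfl | ⟨s, t, hs, ht, hst⟩
  · simp at hx
  · simp at hy
  · rw [hs, Option.mem_some_iff] at hx
    rw [ht, Option.mem_some_iff] at hy
    subst hx hy
    exact hst

theorem factorClosed_finMExt (lam : O → Set (Step O L)) : FactorClosed (FinMExt lam) := by
  rintro l ⟨-, hchain, hstep⟩ l₁ l₂ l₃ rfl hne
  exact ⟨hne, hchain.infix ⟨l₁, l₃, rfl⟩, fun s hs => hstep s (by simp [hs])⟩

theorem compClosed_finMExt (lam : O → Set (Step O L)) : CompClosed (FinMExt lam) := by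
  rintro l₁ ⟨hne₁, hchain₁, hstep₁⟩ l₂ ⟨-, hchain₂, hstep₂⟩ hcomp
  refine ⟨by simp [hne₁], chainOK_append_of_composable hchain₁ hchain₂ hcomp, fun s hs => ?_⟩
  rcases List.mem_append.1 hs with hs | hs
  · exact hstep₁ s hs
  · exact hstep₂ s hs

theorem singleton_mem_of_factorClosed {ζ : Set (List (Step O L))} (hζ : FactorClosed ζ)
    {l : List (Step O L)} (hl : l ∈ ζ) {s : Step O L} (hs : s ∈ l) : [s] ∈ ζ := by
  obtain ⟨l₁, l₃, rfl⟩ := List.append_of_mem hs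
  exact hζ _ hl l₁ [s] l₃ (by simp) (List.cons_ne_nil s [])

theorem mem_of_compClosed_of_forall_singleton_mem {ζ : Set (List (Step O L))}
    (hζ : CompClosed ζ) {l : List (Step O L)} (hne : l ≠ []) (hchain : ChainOK l)
    (hsingle : ∀ s ∈ l, [s] ∈ ζ) : l ∈ ζ := by
  induction l with
  | nil => exact absurd rfl hne
  | cons s rest ih =>
    rcases rest with _ | ⟨t, rest⟩
    · exact hsingle s (List.mem_singleton_self s)
    · have hrest : t :: rest ∈ ζ :=
        ih (List.cons_ne_nil t rest) hchain.tail fun x hx => hsingle x (List.mem_cons_of_mem s hx)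
      have hcomp : Composable [s] (t :: rest) :=
        Or.inr (Or.inr ⟨s, t, rfl, rfl, (List.isChain_cons_cons.1 hchain).1⟩)
      exact hζ [s] (hsingle s List.mem_cons_self) _ hrest hcomp

def singletonStrategy (ζ : Set (List (Step O L))) (a : O) : Set (Step O L) :=
  {s | s.1 = a ∧ [s] ∈ ζ}

theorem finMExt_singletonStrategy {ζ : Set (List (Step O L))}
    (hderiv : ∀ l ∈ ζ, l ≠ [] ∧ ChainOK l) (hfactor : FactorClosed ζ) (hcomp : CompClosed ζ) :
    FinMExt (singletonStrategy ζ) = ζ := by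
  ext l
  constructor
  · rintro ⟨hne, hchain, hstep⟩
    exact mem_of_compClosed_of_forall_singleton_mem hcomp hne hchain fun s hs => (hstep s hs).2
  · intro hl
    obtain ⟨hne, hchain⟩ := hderiv l hl
    exact ⟨hne, hchain, fun s hs => ⟨rfl, singleton_mem_of_factorClosed hfactor hl hs⟩⟩

end

theorem memoryless_iff_factor_and_composition_closed_general
    (O L : Type) (Γ : Set (Step O L))
    (ζ : Set (List (Step O L)))
    (hζ : ∀ l ∈ ζ, l ≠ [] ∧ ChainOK l ∧ ∀ s ∈ l, s ∈ Γ) :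
    (∃ lam : O → Set (Step O L),
        (∀ a s, s ∈ lam a → s.1 = a ∧ s ∈ Γ) ∧ FinMExt lam = ζ)
      ↔ FactorClosed ζ ∧ CompClosed ζ := by
  constructor
  · rintro ⟨lam, -, rfl⟩
    exact ⟨factorClosed_finMExt lam, compClosed_finMExt lam⟩
  · rintro ⟨hfactor, hcomp⟩
    refine ⟨singletonStrategy ζ, fun a s hs => ⟨hs.1, (hζ _ hs.2).2.2 s (List.mem_singleton_self s)⟩,
      finMExt_singletonStrategy (fun l hl => ⟨(hζ l hl).1, (hζ l hl).2.1⟩) hfactor hcomp⟩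

/-- an abstract strategy ζ consisting of finite derivations is the
finite support of the extension of some memoryless intensional strategy iff ζ
is factor-closed and closed under composition. -/
theorem memoryless_iff_factor_and_composition_closed
    (O L : Type) (Γ : Set (Step O L)) (hΓ : FunctionalARS Γ)
    (ζ : Set (List (Step O L)))
    (hζ : ∀ l ∈ ζ, l ≠ [] ∧ ChainOK l ∧ ∀ s ∈ l, s ∈ Γ) :
    (∃ lam : O → Set (Step O L),
        (∀ a s, s ∈ lam a → s.1 = a ∧ s ∈ Γ) ∧ FinMExt lam = ζ)
      ↔ FactorClosed ζ ∧ CompClosed ζ :=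
  memoryless_iff_factor_and_composition_closed_general O L Γ ζ hζ
end

section
/- Given an abstract strategy ζ over an ARS consisting only of finite derivations, there exists an intensional strategy with memory λ whose finite support of extension equals ζ if and only if ζ is prefix-closed. -/
/-- The finite support of the extension of an intensional strategy with
memory: all finite non-empty derivations each of whose steps obeys λ applied to
the trace of the preceding steps. -/
def FinExt {O L : Type} (lam : List (O × L) → O → Set (Step O L)) :
    Set (List (Step O L)) :=
  {l | l ≠ [] ∧ ChainOK l ∧
    ∀ i, ∀ h : i < l.length, l.get ⟨i, h⟩ ∈ lam (histL (l.take i)) (l.get ⟨i, h⟩).1}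

/-- ζ is closed under non-empty prefixes. -/
def PrefixClosedL {O L : Type} (ζ : Set (List (Step O L))) : Prop :=
  ∀ l ∈ ζ, ∀ p : List (Step O L), p ≠ [] → p <+: l → p ∈ ζ

/-! In a functional ARS a derivation is determined by its trace. Hence a prefix-closed `ζ` is
the finite support of the strategy that, after a history `α` at `a`, allows exactly the steps
`(a, φ, b) ∈ Γ` for which `α ++ [(a, φ)]` is the trace of a derivation in `ζ`. Conversely,
the defining condition of `FinExt` only looks at the steps before each index, so it passes to
prefixes. -/

section

variable {O L : Type}

theorem eq_of_histL_eq {Γ : Set (Step O L)} (hΓ : FunctionalARS Γ) :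
    ∀ {l m : List (Step O L)}, (∀ s ∈ l, s ∈ Γ) → (∀ s ∈ m, s ∈ Γ) →
      histL l = histL m → l = m
  | [], [], _, _, _ => rfl
  | (a, φ, b) :: l, (a', φ', b') :: m, hl, hm, h => by
    simp only [histL, List.map_cons, List.cons.injEq, Prod.mk.injEq] at h
    obtain ⟨⟨rfl, rfl⟩, htail⟩ := h
    rw [hΓ a φ b b' (hl _ List.mem_cons_self) (hm _ List.mem_cons_self),
      eq_of_histL_eq hΓ (fun s hs => hl s (List.mem_cons_of_mem _ hs))
        (fun s hs => hm s (List.mem_cons_of_mem _ hs)) htail]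

theorem histL_take_succ (l : List (Step O L)) (i : ℕ) (h : i < l.length) :
    histL (l.take (i + 1)) =
      histL (l.take i) ++ [((l.get ⟨i, h⟩).1, (l.get ⟨i, h⟩).2.1)] := by
  simp only [histL, ← List.take_concat_get h, List.concat_eq_append, List.map_append]
  rfl

theorem prefixClosedL_finExt (lam : List (O × L) → O → Set (Step O L)) :
    PrefixClosedL (FinExt lam) := by
  rintro _ ⟨-, hchain, hsteps⟩ p hp ⟨t, rfl⟩
  refine ⟨hp, hchain.prefix ⟨t, rfl⟩, fun i hi => ?_⟩
  have hit : i < (p ++ t).length := by rw [List.length_append]; omega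
  simpa [List.getElem_append_left hi, List.take_append_of_le_length hi.le] using hsteps i hit

def traceStrategy (Γ : Set (Step O L)) (ζ : Set (List (Step O L))) :
    List (O × L) → O → Set (Step O L) :=
  fun α a => {s | s.1 = a ∧ s ∈ Γ ∧ ∃ m ∈ ζ, histL m = α ++ [(a, s.2.1)]}

theorem finExt_traceStrategy_subset {Γ : Set (Step O L)} (hΓ : FunctionalARS Γ)
    {ζ : Set (List (Step O L))} (hζΓ : ∀ l ∈ ζ, ∀ s ∈ l, s ∈ Γ) :
    FinExt (traceStrategy Γ ζ) ⊆ ζ := by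
  rintro l ⟨hne, -, hsteps⟩
  have hlΓ : ∀ s ∈ l, s ∈ Γ := by
    intro s hs
    obtain ⟨⟨i, hi⟩, rfl⟩ := List.mem_iff_get.mp hs
    exact (hsteps i hi).2.1
  have hlast : l.length - 1 < l.length := by
    have := List.length_pos_iff.mpr hne
    omega
  obtain ⟨hsrc, -, m, hm, hhist⟩ := hsteps _ hlast
  have hlm : histL l = histL m := by
    rw [hhist, hsrc, ← histL_take_succ l _ hlast, Nat.sub_add_cancel (by omega), List.take_length]
  rwa [eq_of_histL_eq hΓ hlΓ (hζΓ m hm) hlm]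

theorem subset_finExt_traceStrategy {Γ : Set (Step O L)} {ζ : Set (List (Step O L))}
    (hζ : ∀ l ∈ ζ, l ≠ [] ∧ ChainOK l ∧ ∀ s ∈ l, s ∈ Γ) (hpc : PrefixClosedL ζ) :
    ζ ⊆ FinExt (traceStrategy Γ ζ) := by
  intro l hl
  obtain ⟨hne, hchain, hlΓ⟩ := hζ l hl
  refine ⟨hne, hchain, fun i hi => ⟨rfl, hlΓ _ (List.get_mem l _), l.take (i + 1), ?_,
    histL_take_succ l i hi⟩⟩
  exact hpc l hl _ (by simp [List.take_eq_nil_iff, hne]) (List.take_prefix _ _)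

end

/-- an abstract strategy ζ consisting of finite derivations is the
finite support of the extension of some intensional strategy with memory iff ζ
is prefix-closed. -/
theorem with_memory_iff_prefix_closed
    (O L : Type) (Γ : Set (Step O L)) (hΓ : FunctionalARS Γ)
    (ζ : Set (List (Step O L)))
    (hζ : ∀ l ∈ ζ, l ≠ [] ∧ ChainOK l ∧ ∀ s ∈ l, s ∈ Γ) :
    (∃ lam : List (O × L) → O → Set (Step O L),
        (∀ α a s, s ∈ lam α a → s.1 = a ∧ s ∈ Γ) ∧ FinExt lam = ζ)
      ↔ PrefixClosedL ζ := by
  constructor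
  · rintro ⟨lam, -, rfl⟩
    exact prefixClosedL_finExt lam
  · intro hpc
    refine ⟨traceStrategy Γ ζ, fun α a s hs => ⟨hs.1, hs.2.1⟩, ?_⟩
    exact (finExt_traceStrategy_subset hΓ fun l hl => (hζ l hl).2.2).antisymm
      (subset_finExt_traceStrategy hζ hpc)
end
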